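/- arXiv:1912.11315 — 5 statements merged into one kernel-verified Lean document; each statement's English description precedes it below -/
import Mathlib

section
/- Let G be a finite abstract simplicial complex on a finite vertex set V, and for each simplex x ∈ G let p_x be a probability distribution on V supported on x (i.e. p_x(v) ≥ 0, p_x(v) = 0 for v ∉ x, and Σ_{v ∈ x} p_x(v) = 1). Define the curvature K(v) = Σ_{x ∈ G, v ∈ x} p_x(v) ω(x). Then the Gauss–Bonnet formula holds: Σ_{v ∈ V} K(v) = χ(G). -/
open Finset

theorem Finset.sum_univ_sum_filter_mem_eq_sum_sum {V M : Type*} [Fintype V] [DecidableEq V]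
    [AddCommMonoid M] (G : Finset (Finset V)) (f : Finset V → V → M) :
    ∑ v : V, ∑ x ∈ G.filter (fun x => v ∈ x), f x v = ∑ x ∈ G, ∑ v ∈ x, f x v :=
  Finset.sum_comm' fun v x => by simp [and_comm]

theorem gauss_bonnet_index_expectation_general
    {V : Type*} [Fintype V] [DecidableEq V]
    (G : Finset (Finset V))
    (p : Finset V → V → ℝ)
    (hsum : ∀ x ∈ G, ∑ v ∈ x, p x v = 1) :
    ∑ v : V, ∑ x ∈ G.filter (fun x => v ∈ x), p x v * (-1 : ℝ) ^ (x.card - 1)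
      = ∑ x ∈ G, (-1 : ℝ) ^ (x.card - 1) := by
  rw [sum_univ_sum_filter_mem_eq_sum_sum]
  refine sum_congr rfl fun x hx => ?_
  rw [← sum_mul, hsum x hx, one_mul]

/-- **Gauss–Bonnet for index expectation curvature on a simplicial complex.**
`G` is a finite abstract simplicial complex on the finite vertex set `V`
(a collection of nonempty finite subsets closed under nonempty subsets, covering `V`),
`p x` is a probability distribution supported on the simplex `x`, and the curvature
`K v = ∑_{x ∈ G, v ∈ x} p x v · ω x` with `ω x = (-1)^(|x|-1)` sums to the
Euler characteristic `χ(G) = ∑_{x ∈ G} ω x`. -/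
theorem gauss_bonnet_index_expectation
    {V : Type*} [Fintype V] [DecidableEq V]
    (G : Finset (Finset V))
    (hne : ∀ x ∈ G, x.Nonempty)
    (hclosed : ∀ x ∈ G, ∀ y : Finset V, y ⊆ x → y.Nonempty → y ∈ G)
    (hcover : ∀ v : V, ∃ x ∈ G, v ∈ x)
    (p : Finset V → V → ℝ)
    (hp0 : ∀ x ∈ G, ∀ v : V, 0 ≤ p x v)
    (hsupp : ∀ x ∈ G, ∀ v : V, v ∉ x → p x v = 0)
    (hsum : ∀ x ∈ G, ∑ v ∈ x, p x v = 1) :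
    ∑ v : V, ∑ x ∈ G.filter (fun x => v ∈ x), p x v * (-1 : ℝ) ^ (x.card - 1)
      = ∑ x ∈ G, (-1 : ℝ) ^ (x.card - 1) :=
  gauss_bonnet_index_expectation_general G p hsum
end

section
/- Let G = (V,E) be a finite tree (a finite connected acyclic simple graph) with |V| = n ≥ 1 vertices. Then there is exactly one curvature family on G with constant curvature, i.e. exactly one choice of values p_e(a), p_e(b) ≥ 0 with p_e(a) + p_e(b) = 1 for each edge e = {a,b} such that 1 - Σ_{e ∋ v} p_e(v) = 1/n for every vertex v. -/
/-!
Removing an edge `ab` from a tree splits it into the branch `branch a b` containing `b` and the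
branch `branch b a` containing `a`. The family `p a b = #(branch a b) / n` works: the branches
at `v` through its neighbours partition the other `n - 1` vertices, so `K(v) = 1/n`. For
uniqueness, the difference `D` of two such families is antisymmetric and has zero row sums;
summing the row sums over `branch a b`, the inner edges cancel and only the bridge remains, so
`D b a = 0`.
-/

open Finset

theorem Finset.sum_sum_eq_zero_of_antisymm {α M : Type*} [AddCommGroup M] [IsAddTorsionFree M]
    (s : Finset α) {f : α → α → M} (hf : ∀ x y, f x y = -f y x) :
    ∑ x ∈ s, ∑ y ∈ s, f x y = 0 := by
  have h : ∑ x ∈ s, ∑ y ∈ s, f x y = -∑ x ∈ s, ∑ y ∈ s, f x y :=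
    calc ∑ x ∈ s, ∑ y ∈ s, f x y = ∑ y ∈ s, ∑ x ∈ s, -f y x :=
          sum_comm.trans (sum_congr rfl fun y _ => sum_congr rfl fun x _ => hf x y)
      _ = -∑ x ∈ s, ∑ y ∈ s, f x y := by simp only [sum_neg_distrib]
  rw [← nsmul_right_inj two_ne_zero, two_nsmul, nsmul_zero]
  nth_rewrite 2 [h]
  exact add_neg_cancel _

namespace SimpleGraph

variable {V : Type*} {G : SimpleGraph V} {a b v w w' x y : V}

theorem reachable_deleteEdges_of_adj (hx : (G.deleteEdges {s(a, b)}).Reachable v x)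
    (hxy : G.Adj x y) (hne : s(x, y) ≠ s(a, b)) : (G.deleteEdges {s(a, b)}).Reachable v y :=
  hx.trans (deleteEdges_adj.mpr ⟨hxy, hne⟩).reachable

variable [Fintype V]

open scoped Classical in
noncomputable def branch (G : SimpleGraph V) (a b : V) : Finset V :=
  {x | (G.deleteEdges {s(a, b)}).Reachable b x}

theorem mem_branch : x ∈ G.branch a b ↔ (G.deleteEdges {s(a, b)}).Reachable b x := by
  simp [branch]

theorem mem_branch_swap : x ∈ G.branch b a ↔ (G.deleteEdges {s(a, b)}).Reachable a x := by
  rw [mem_branch, Sym2.eq_swap]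

theorem self_mem_branch : b ∈ G.branch a b := mem_branch.mpr .rfl

theorem mem_branch_or_mem_branch (hG : G.Preconnected) (x : V) :
    x ∈ G.branch a b ∨ x ∈ G.branch b a := by
  have key : ∀ {u} (W : G.Walk u x), u ∈ G.branch a b ∨ u ∈ G.branch b a →
      x ∈ G.branch a b ∨ x ∈ G.branch b a := by
    intro u W
    induction W with
    | nil => exact id
    | @cons u y _ huy _ ih =>
      intro hu
      apply ih
      by_cases he : s(u, y) = s(a, b)
      · rcases Sym2.eq_iff.mp he with ⟨-, rfl⟩ | ⟨-, rfl⟩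
        · exact .inl self_mem_branch
        · exact .inr self_mem_branch
      · rw [mem_branch, mem_branch_swap] at hu ⊢
        exact hu.imp (reachable_deleteEdges_of_adj · huy he)
          (reachable_deleteEdges_of_adj · huy he)
  obtain ⟨W⟩ := hG a x
  exact key W (.inr self_mem_branch)

theorem eq_of_mem_branch_of_notMem_branch (hx : x ∈ G.branch a b) (hxy : G.Adj x y)
    (hy : y ∉ G.branch a b) : x = b ∧ y = a := by
  by_cases he : s(x, y) = s(a, b)
  · rcases Sym2.eq_iff.mp he with ⟨-, rfl⟩ | hba
    · exact absurd self_mem_branch hy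
    · exact hba
  · exact absurd (mem_branch.mpr (reachable_deleteEdges_of_adj (mem_branch.mp hx) hxy he)) hy

theorem Preconnected.exists_mem_branch (hG : G.Preconnected) (hx : x ≠ v) :
    ∃ w, G.Adj v w ∧ x ∈ G.branch v w := by
  obtain ⟨W, hW⟩ := (hG v x).exists_isPath
  cases W with
  | nil => exact absurd rfl hx
  | cons hvw W =>
    have hv : v ∉ W.support := ((Walk.cons_isPath_iff hvw W).mp hW).2
    exact ⟨_, hvw, mem_branch.mpr (reachable_deleteEdges_iff_exists_walk.mpr
      ⟨W, fun he => hv (W.fst_mem_support_of_mem_edges he)⟩)⟩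

theorem IsAcyclic.disjoint_branch (hG : G.IsAcyclic) (hab : G.Adj a b) :
    Disjoint (G.branch a b) (G.branch b a) :=
  Finset.disjoint_left.mpr fun _ hb ha =>
    isBridge_iff.mp (isAcyclic_iff_forall_adj_isBridge.mp hG hab)
      ((mem_branch_swap.mp ha).trans (mem_branch.mp hb).symm)

theorem IsAcyclic.notMem_branch (hG : G.IsAcyclic) (hab : G.Adj a b) : a ∉ G.branch a b :=
  fun ha => Finset.disjoint_left.mp (hG.disjoint_branch hab) ha self_mem_branch

theorem IsAcyclic.branch_subset_branch (hG : G.IsAcyclic) (hw' : G.Adj v w')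
    (hne : w ≠ w') : G.branch v w' ⊆ G.branch w v := by
  classical
  intro y hy
  obtain ⟨W, hW⟩ := reachable_deleteEdges_iff_exists_walk.mp (mem_branch.mp hy)
  have hv : v ∉ W.support := fun hv => hG.notMem_branch hw' <| mem_branch.mpr <|
    reachable_deleteEdges_iff_exists_walk.mpr
      ⟨W.takeUntil v hv, fun he => hW (W.edges_takeUntil_subset_edges hv he)⟩
  refine mem_branch_swap.mpr (reachable_deleteEdges_iff_exists_walk.mpr ⟨.cons hw' W, ?_⟩)
  rw [Walk.edges_cons, List.mem_cons, not_or]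
  exact ⟨fun h => hne (Sym2.congr_right.mp h), fun he => hv (W.fst_mem_support_of_mem_edges he)⟩

theorem IsAcyclic.disjoint_branch_of_ne (hG : G.IsAcyclic) (hw : G.Adj v w) (hw' : G.Adj v w')
    (hne : w ≠ w') : Disjoint (G.branch v w) (G.branch v w') :=
  (hG.disjoint_branch hw).mono_right (hG.branch_subset_branch hw' hne)

theorem IsTree.card_branch_add_card_branch (hG : G.IsTree) (hab : G.Adj a b) :
    #(G.branch a b) + #(G.branch b a) = Fintype.card V := by
  classical
  rw [← card_union_of_disjoint (hG.isAcyclic.disjoint_branch hab), ← card_univ]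
  congr
  exact eq_univ_of_forall fun x =>
    mem_union.mpr (mem_branch_or_mem_branch hG.connected.preconnected x)

theorem IsTree.sum_card_branch_add_one [DecidableRel G.Adj] (hG : G.IsTree) (v : V) :
    ∑ w ∈ G.neighborFinset v, #(G.branch v w) + 1 = Fintype.card V := by
  classical
  have hunion : (G.neighborFinset v).biUnion (G.branch v) = univ.erase v := by
    ext x
    simp only [mem_biUnion, mem_neighborFinset, mem_erase, mem_univ, and_true]
    constructor
    · rintro ⟨w, hw, hx⟩ rfl
      exact hG.isAcyclic.notMem_branch hw hx
    · exact hG.connected.preconnected.exists_mem_branch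
  rw [← card_biUnion fun w hw w' hw' hne => hG.isAcyclic.disjoint_branch_of_ne
    ((mem_neighborFinset ..).mp hw) ((mem_neighborFinset ..).mp hw') hne, hunion,
    card_erase_add_one (mem_univ v), card_univ]

theorem Connected.card_pos (hG : G.Connected) : 0 < Fintype.card V :=
  Fintype.card_pos_iff.mpr hG.nonempty

noncomputable def branchShare (G : SimpleGraph V) [DecidableRel G.Adj] (a b : V) : ℝ :=
  if G.Adj a b then #(G.branch a b) / Fintype.card V else 0

section branchShare

variable [DecidableRel G.Adj]

theorem branchShare_of_not_adj (hab : ¬ G.Adj a b) : G.branchShare a b = 0 := if_neg hab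

theorem branchShare_nonneg : 0 ≤ G.branchShare a b := by
  unfold branchShare
  split_ifs <;> positivity

theorem IsTree.branchShare_add_branchShare (hG : G.IsTree) (hab : G.Adj a b) :
    G.branchShare a b + G.branchShare b a = 1 := by
  rw [branchShare, branchShare, if_pos hab, if_pos hab.symm, ← add_div, ← Nat.cast_add,
    hG.card_branch_add_card_branch hab, div_self (by exact_mod_cast hG.connected.card_pos.ne')]

theorem IsTree.sum_branchShare (hG : G.IsTree) (v : V) :
    ∑ w ∈ G.neighborFinset v, G.branchShare v w = 1 - 1 / Fintype.card V := by
  unfold branchShare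
  rw [sum_congr rfl fun w hw => if_pos ((mem_neighborFinset ..).mp hw), ← sum_div,
    eq_sub_iff_add_eq, ← add_div, div_eq_one_iff_eq (by exact_mod_cast hG.connected.card_pos.ne')]
  exact_mod_cast hG.sum_card_branch_add_one v

end branchShare

variable {M : Type*} [AddCommGroup M] [IsAddTorsionFree M] {D : V → V → M}

theorem IsAcyclic.sum_sum_branch (hG : G.IsAcyclic) (hab : G.Adj a b)
    (hD0 : ∀ x y, ¬ G.Adj x y → D x y = 0) (hanti : ∀ x y, D x y = -D y x) :
    ∑ x ∈ G.branch a b, ∑ y, D x y = D b a := by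
  classical
  set s := G.branch a b
  have hcross : ∑ x ∈ s, ∑ y ∈ sᶜ, D x y = D b a := by
    rw [← sum_product']
    refine sum_eq_single_of_mem (b, a)
      (mem_product.mpr ⟨self_mem_branch, mem_compl.mpr (hG.notMem_branch hab)⟩) ?_
    rintro ⟨x, y⟩ hxy hne
    rw [mem_product, mem_compl] at hxy
    refine hD0 x y fun hadj => hne ?_
    obtain ⟨rfl, rfl⟩ := eq_of_mem_branch_of_notMem_branch hxy.1 hadj hxy.2
    rfl
  calc ∑ x ∈ s, ∑ y, D x y = ∑ x ∈ s, ∑ y ∈ s, D x y + ∑ x ∈ s, ∑ y ∈ sᶜ, D x y := by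
        rw [← sum_add_distrib]
        exact sum_congr rfl fun x _ => (sum_add_sum_compl s _).symm
    _ = D b a := by rw [s.sum_sum_eq_zero_of_antisymm hanti, hcross, zero_add]

theorem IsAcyclic.eq_zero_of_antisymm_of_sum_neighborFinset_eq_zero [DecidableRel G.Adj]
    (hG : G.IsAcyclic) (hD0 : ∀ x y, ¬ G.Adj x y → D x y = 0)
    (hanti : ∀ x y, G.Adj x y → D x y = -D y x)
    (hsum : ∀ x, ∑ y ∈ G.neighborFinset x, D x y = 0) : D = 0 := by
  have hanti' (x y : V) : D x y = -D y x := by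
    by_cases hxy : G.Adj x y
    · exact hanti x y hxy
    · rw [hD0 x y hxy, hD0 y x (mt G.adj_symm hxy), neg_zero]
  have hsum' (x : V) : ∑ y, D x y = 0 := by
    rw [← hsum x]
    exact (sum_subset (subset_univ _) fun y _ hy => hD0 x y (by simpa using hy)).symm
  funext a b
  by_cases hab : G.Adj a b
  · have hba : D b a = 0 := by
      rw [← hG.sum_sum_branch hab hD0 hanti']
      exact sum_eq_zero fun x _ => hsum' x
    rw [hanti', hba, neg_zero, Pi.zero_apply, Pi.zero_apply]
  · exact hD0 a b hab

end SimpleGraph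

open SimpleGraph

theorem tree_unique_constant_curvature_general
    {V : Type*} [Fintype V] [DecidableEq V]
    (G : SimpleGraph V) [DecidableRel G.Adj]
    (htree : G.IsTree) (n : ℕ) (hn : n = Fintype.card V) :
    ∃! p : V → V → ℝ,
      (∀ a b : V, ¬ G.Adj a b → p a b = 0) ∧
      (∀ a b : V, G.Adj a b → 0 ≤ p a b) ∧
      (∀ a b : V, G.Adj a b → p a b + p b a = 1) ∧
      (∀ v : V, (1 : ℝ) - ∑ w ∈ G.neighborFinset v, p v w = 1 / (n : ℝ)) := by
  subst hn
  refine ⟨G.branchShare, ⟨fun a b => branchShare_of_not_adj, fun a b _ => branchShare_nonneg,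
    fun a b => htree.branchShare_add_branchShare, fun v => ?_⟩, ?_⟩
  · rw [htree.sum_branchShare, sub_sub_cancel]
  rintro q ⟨hq0, -, hq_add, hq_sum⟩
  refine sub_eq_zero.mp (htree.isAcyclic.eq_zero_of_antisymm_of_sum_neighborFinset_eq_zero
    (fun a b hab => ?_) (fun a b hab => ?_) (fun v => ?_))
  · simp only [Pi.sub_apply, hq0 a b hab, branchShare_of_not_adj hab, sub_zero]
  · simp only [Pi.sub_apply]
    linarith [hq_add a b hab, htree.branchShare_add_branchShare hab]
  · simp only [Pi.sub_apply, sum_sub_distrib]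
    linarith [hq_sum v, htree.sum_branchShare v]

/-- **Trees admit a unique constant curvature family.**
For a finite tree `G = (V,E)` with `n = |V| ≥ 1` there is exactly one curvature
family with constant curvature: exactly one choice of edge weights `p a b`
(the share of the edge `{a,b}` given to its endpoint `a`; we normalize `p a b = 0`
for non-adjacent pairs so that the family is determined by its values on edges)
with `p a b ≥ 0` and `p a b + p b a = 1` on each edge, such that
`K(v) = 1 - ∑_{w ~ v} p v w = 1/n` for every vertex `v`. -/
theorem tree_unique_constant_curvature
    {V : Type*} [Fintype V] [DecidableEq V]
    (G : SimpleGraph V) [DecidableRel G.Adj]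
    (htree : G.IsTree) (n : ℕ) (hn : n = Fintype.card V) (hn1 : 1 ≤ n) :
    ∃! p : V → V → ℝ,
      (∀ a b : V, ¬ G.Adj a b → p a b = 0) ∧
      (∀ a b : V, G.Adj a b → 0 ≤ p a b) ∧
      (∀ a b : V, G.Adj a b → p a b + p b a = 1) ∧
      (∀ v : V, (1 : ℝ) - ∑ w ∈ G.neighborFinset v, p v w = 1 / (n : ℝ)) :=
  tree_unique_constant_curvature_general G htree n hn
end

section
/- There exists a finite connected simple graph G = (V,E) (containing triangles) with Euler characteristic χ(G) = 0 such that no curvature family on the Whitney complex of G has constant curvature. -/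
open Finset

open scoped Classical in
/-- The Whitney complex of a finite simple graph `G`: the finite set of
nonempty cliques (vertex sets of complete subgraphs) of `G`. -/
noncomputable def whitneySimplices {V : Type*} [Fintype V]
    (G : SimpleGraph V) : Finset (Finset V) :=
  Finset.univ.powerset.filter fun x => x.Nonempty ∧ ∀ a ∈ x, ∀ b ∈ x, a ≠ b → G.Adj a b

/-- The Euler characteristic `χ(G) = ∑_x (-1)^(|x|-1)` of the Whitney complex. -/
noncomputable def whitneyChi {V : Type*} [Fintype V] (G : SimpleGraph V) : ℝ :=
  ∑ x ∈ whitneySimplices G, (-1 : ℝ) ^ (x.card - 1)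

/-- A curvature family on the Whitney complex of `G`: each simplex `x` carries
a probability distribution `p x` on `V` supported on `x`. -/
def IsCurvFamily {V : Type*} [Fintype V] (G : SimpleGraph V)
    (p : Finset V → V → ℝ) : Prop :=
  ∀ x ∈ whitneySimplices G,
    (∀ v : V, 0 ≤ p x v) ∧ (∀ v : V, v ∉ x → p x v = 0) ∧ (∑ v ∈ x, p x v = 1)

open scoped Classical in
/-- The curvature `K_p(v) = ∑_{x ∋ v} p x v · (-1)^(|x|-1)` of a curvature family. -/
noncomputable def curvK {V : Type*} [Fintype V] (G : SimpleGraph V)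
    (p : Finset V → V → ℝ) (v : V) : ℝ :=
  ∑ x ∈ (whitneySimplices G).filter (fun x => v ∈ x), p x v * (-1 : ℝ) ^ (x.card - 1)

/-!
The graph is an octahedron (a 2-sphere, `χ = 2`) joined by one edge to `K_{2,3}` (`χ = -1`);
the bridging edge counts `-1`, so `χ = 0` and constant curvature means `K ≡ 0`. Sum `K` over
the six octahedron vertices: a simplex inside the octahedron carries all of its mass there and
contributes its full sign, while the bridge `{0, 6}` contributes `-p_{06}(0) ≥ -1`. The sum is
therefore at least `2 - 1 = 1`.
-/

theorem sum_sign_eq_intCast {α : Type*} (s : Finset (Finset α)) :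
    ∑ x ∈ s, (-1 : ℝ) ^ (#x - 1) = ((∑ x ∈ s, (-1 : ℤ) ^ (#x - 1) : ℤ) : ℝ) := by
  push_cast
  rfl

section WhitneyComplex

variable {V : Type*} [Fintype V] [DecidableEq V]

omit [DecidableEq V] in
theorem mem_whitneySimplices {G : SimpleGraph V} {x : Finset V} :
    x ∈ whitneySimplices G ↔ x.Nonempty ∧ ∀ a ∈ x, ∀ b ∈ x, a ≠ b → G.Adj a b := by
  simp [whitneySimplices]

noncomputable def whitneyChiWithin (G : SimpleGraph V) (S : Finset V) : ℝ :=
  ∑ x ∈ whitneySimplices G with x ⊆ S, (-1 : ℝ) ^ (#x - 1)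

noncomputable def crossingSimplices (G : SimpleGraph V) (S : Finset V) : Finset (Finset V) :=
  {x ∈ whitneySimplices G | ¬ x ⊆ S ∧ ¬ Disjoint S x}

theorem filter_whitneySimplices_subset (G : SimpleGraph V) [DecidableRel G.Adj] (S : Finset V) :
    {x ∈ whitneySimplices G | x ⊆ S} =
      {x ∈ S.powerset | x.Nonempty ∧ ∀ a ∈ x, ∀ b ∈ x, a ≠ b → G.Adj a b} := by
  ext x
  simp only [mem_filter, mem_whitneySimplices, mem_powerset]
  tauto

theorem whitneyChi_eq_add (G : SimpleGraph V) (S : Finset V) :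
    whitneyChi G = whitneyChiWithin G S + whitneyChiWithin G Sᶜ +
      ∑ x ∈ crossingSimplices G S, (-1 : ℝ) ^ (#x - 1) := by
  have houtside : {x ∈ whitneySimplices G | ¬ x ⊆ S ∧ Disjoint S x} =
      {x ∈ whitneySimplices G | x ⊆ Sᶜ} := by
    refine filter_congr fun x hx => ?_
    obtain ⟨v, hv⟩ := (mem_whitneySimplices.mp hx).1
    rw [subset_compl_iff_disjoint_left]
    exact ⟨And.right, fun hdisj => ⟨fun hxS => disjoint_left.mp hdisj (hxS hv) hv, hdisj⟩⟩
  rw [whitneyChi, ← sum_filter_add_sum_filter_not _ (· ⊆ S),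
    ← sum_filter_add_sum_filter_not (filter (¬ · ⊆ S) _) (Disjoint S ·), filter_filter,
    filter_filter, houtside, whitneyChiWithin, whitneyChiWithin, crossingSimplices, add_assoc]

theorem crossingSimplices_eq_singleton {G : SimpleGraph V} {S : Finset V} {a b : V}
    (ha : a ∈ S) (hb : b ∉ S) (hab : G.Adj a b)
    (hedge : ∀ u ∈ S, ∀ w ∉ S, G.Adj u w → u = a ∧ w = b)
    (hcommon : ∀ c, ¬ (G.Adj a c ∧ G.Adj b c)) :
    crossingSimplices G S = {{a, b}} := by
  ext x
  simp only [crossingSimplices, mem_filter, mem_whitneySimplices, mem_singleton]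
  constructor
  · rintro ⟨⟨-, hclique⟩, hout, hin⟩
    obtain ⟨w, hwx, hwS⟩ := not_subset.mp hout
    obtain ⟨u, huS, hux⟩ := not_disjoint_iff.mp hin
    obtain ⟨rfl, rfl⟩ := hedge u huS w hwS (hclique u hux w hwx (by rintro rfl; exact hwS huS))
    refine Subset.antisymm (fun c hc => ?_) (insert_subset hux (singleton_subset_iff.mpr hwx))
    by_contra hcab
    simp only [mem_insert, mem_singleton, not_or] at hcab
    exact hcommon c ⟨hclique _ hux c hc (Ne.symm hcab.1), hclique _ hwx c hc (Ne.symm hcab.2)⟩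
  · rintro rfl
    refine ⟨⟨insert_nonempty _ _, ?_⟩, fun h => hb (h (by simp)),
      not_disjoint_iff.mpr ⟨a, ha, by simp⟩⟩
    simp only [mem_insert, mem_singleton]
    rintro u (rfl | rfl) w (rfl | rfl) huw
    exacts [absurd rfl huw, hab, hab.symm, absurd rfl huw]

theorem sum_curvK_eq (G : SimpleGraph V) (p : Finset V → V → ℝ) (S : Finset V) :
    ∑ v ∈ S, curvK G p v =
      ∑ x ∈ whitneySimplices G, (-1 : ℝ) ^ (#x - 1) * ∑ v ∈ S ∩ x, p x v := by
  simp only [curvK, sum_filter]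
  rw [sum_comm]
  refine sum_congr rfl fun x _ => ?_
  rw [mul_sum, ← sum_ite_mem]
  refine sum_congr rfl fun v _ => ?_
  split_ifs <;> ring

variable {G : SimpleGraph V} {p : Finset V → V → ℝ}

theorem IsCurvFamily.le_sign_mul_sum_inter (hp : IsCurvFamily G p) {x : Finset V}
    (hx : x ∈ whitneySimplices G) (S : Finset V) :
    (if x ⊆ S then (-1 : ℝ) ^ (#x - 1) else if Disjoint S x then 0 else -1) ≤
      (-1 : ℝ) ^ (#x - 1) * ∑ v ∈ S ∩ x, p x v := by
  obtain ⟨hnonneg, -, hsum⟩ := hp x hx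
  split_ifs with hxS hdisj
  · rw [inter_eq_right.mpr hxS, hsum, mul_one]
  · rw [disjoint_iff_inter_eq_empty.mp hdisj, sum_empty, mul_zero]
  · have hmass_nonneg : 0 ≤ ∑ v ∈ S ∩ x, p x v := sum_nonneg fun v _ => hnonneg v
    have hmass_le_one : ∑ v ∈ S ∩ x, p x v ≤ 1 :=
      hsum ▸ sum_le_sum_of_subset_of_nonneg inter_subset_right fun v _ _ => hnonneg v
    rcases neg_one_pow_eq_or ℝ (#x - 1) with h | h <;> rw [h] <;> linarith

theorem IsCurvFamily.whitneyChiWithin_sub_card_crossing_le (hp : IsCurvFamily G p)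
    (S : Finset V) :
    whitneyChiWithin G S - #(crossingSimplices G S) ≤ ∑ v ∈ S, curvK G p v := by
  rw [sum_curvK_eq]
  calc whitneyChiWithin G S - #(crossingSimplices G S)
      = ∑ x ∈ whitneySimplices G,
          (if x ⊆ S then (-1 : ℝ) ^ (#x - 1) else if Disjoint S x then 0 else -1) := by
        rw [sum_ite, sum_ite, sum_const_zero, sum_const, filter_filter, whitneyChiWithin,
          crossingSimplices]
        simp [sub_eq_add_neg]
    _ ≤ _ := sum_le_sum fun x hx => hp.le_sign_mul_sum_inter hx S

theorem not_exists_constant_curvature_of_whitneyChi_eq_zero (hχ : whitneyChi G = 0)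
    (S : Finset V)
    (hS : #(crossingSimplices G S) < whitneyChiWithin G S) :
    ¬ ∃ p : Finset V → V → ℝ, IsCurvFamily G p ∧
        ∀ v : V, curvK G p v = whitneyChi G / (Fintype.card V : ℝ) := by
  rintro ⟨p, hp, hK⟩
  have hzero : ∑ v ∈ S, curvK G p v = 0 := by simp [hK, hχ]
  linarith [hp.whitneyChiWithin_sub_card_crossing_le S]

end WhitneyComplex

-- Vertices `0, …, 5` span an octahedron with antipodal pairs `{0, 5}, {1, 3}, {2, 4}`, vertices
-- `6, …, 10` span `K_{2,3}` with parts `{6, 10}, {7, 8, 9}`, and the edge `0 6` joins the two.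
def octahedronThetaEdges : List (Fin 11 × Fin 11) :=
  [(0, 1), (0, 2), (0, 3), (0, 4), (1, 2), (2, 3), (3, 4), (4, 1), (5, 1), (5, 2), (5, 3), (5, 4),
    (0, 6), (6, 7), (6, 8), (6, 9), (10, 7), (10, 8), (10, 9)]

def octahedronTheta : SimpleGraph (Fin 11) :=
  SimpleGraph.fromRel fun a b => (a, b) ∈ octahedronThetaEdges

instance : DecidableRel octahedronTheta.Adj := fun a b =>
  inferInstanceAs
    (Decidable (a ≠ b ∧ ((a, b) ∈ octahedronThetaEdges ∨ (b, a) ∈ octahedronThetaEdges)))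

def octahedron : Finset (Fin 11) := {0, 1, 2, 3, 4, 5}

theorem octahedronTheta_connected : octahedronTheta.Connected :=
  SimpleGraph.connected_iff_exists_forall_reachable _ |>.mpr ⟨0, by decide⟩

theorem whitneyChiWithin_octahedron : whitneyChiWithin octahedronTheta octahedron = 2 := by
  rw [whitneyChiWithin, filter_whitneySimplices_subset, sum_sign_eq_intCast,
    ← Int.cast_two (R := ℝ), Int.cast_inj]
  decide

theorem whitneyChiWithin_compl_octahedron :
    whitneyChiWithin octahedronTheta octahedronᶜ = -1 := by
  rw [whitneyChiWithin, filter_whitneySimplices_subset, sum_sign_eq_intCast,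
    show (-1 : ℝ) = ((-1 : ℤ) : ℝ) by norm_num, Int.cast_inj]
  decide

theorem crossingSimplices_octahedron :
    crossingSimplices octahedronTheta octahedron = {{0, 6}} :=
  crossingSimplices_eq_singleton (by decide) (by decide) (by decide) (by decide) (by decide)

theorem whitneyChi_octahedronTheta : whitneyChi octahedronTheta = 0 := by
  rw [whitneyChi_eq_add _ octahedron, whitneyChiWithin_octahedron,
    whitneyChiWithin_compl_octahedron, crossingSimplices_octahedron, sum_singleton,
    card_pair (by decide)]
  norm_num

/-- **There is a finite connected simple graph containing triangles, with Euler
characteristic `χ(G) = 0`, admitting no curvature family of constant curvature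
`χ(G)/|V|`.** -/
theorem exists_connected_graph_no_constant_curvature :
    ∃ (n : ℕ) (G : SimpleGraph (Fin n)),
      G.Connected ∧
      (∃ x ∈ whitneySimplices G, x.card = 3) ∧
      whitneyChi G = 0 ∧
      ¬ ∃ p : Finset (Fin n) → Fin n → ℝ, IsCurvFamily G p ∧
          ∀ v : Fin n, curvK G p v = whitneyChi G / (Fintype.card (Fin n) : ℝ) := by
  refine ⟨11, octahedronTheta, octahedronTheta_connected,
    ⟨{0, 1, 2}, mem_whitneySimplices.mpr (by decide), rfl⟩, whitneyChi_octahedronTheta,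
    not_exists_constant_curvature_of_whitneyChi_eq_zero whitneyChi_octahedronTheta octahedron ?_⟩
  rw [crossingSimplices_octahedron, whitneyChiWithin_octahedron]
  norm_num
end

section
/- In the Erdős–Rényi random graph model on n labeled vertices where each of the C(n,2) possible edges is present independently with probability p ∈ [0,1], the expected value of the Euler characteristic χ of the Whitney complex of the random graph equals Σ_{k=1}^{n} (-1)^{k+1} C(n,k) p^{C(k,2)}. -/
open Finset

/-!
Linearity of expectation: `χ` is the sum, over nonempty vertex sets `x`, of `(-1)^(|x|-1)` times
the indicator that `x` is a clique, and `x` is a clique exactly when all `C(|x|,2)` edges inside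
`x` are present, which has probability `p^C(|x|,2)`. Grouping the vertex sets by size gives the
formula.
-/

/-- The Euler characteristic of the Whitney complex of the graph on `Fin n` whose
edges are the elements of `S`: the alternating sum `∑_x (-1)^(|x|-1)` over the
nonempty cliques `x` (equivalently `∑_{k ≥ 1} (-1)^(k+1) N_k`, where `N_k` is the
number of `k`-vertex cliques). -/
def chiOfEdges {n : ℕ} (S : Finset (Sym2 (Fin n))) : ℝ :=
  ∑ x ∈ Finset.univ.powerset.filter
      (fun x : Finset (Fin n) =>
        x.Nonempty ∧ ∀ a ∈ x, ∀ b ∈ x, a ≠ b → s(a, b) ∈ S),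
    (-1 : ℝ) ^ (x.card - 1)

section

variable {α : Type*} [DecidableEq α]

theorem Finset.sum_powerset_filter_nonempty_apply_card {M : Type*} [AddCommGroup M]
    (f : ℕ → M) (s : Finset α) :
    ∑ t ∈ s.powerset with t.Nonempty, f #t = ∑ k ∈ Icc 1 #s, (#s).choose k • f k := by
  have hfilter : {t ∈ s.powerset | t.Nonempty} = s.powerset.erase ∅ := by
    ext t
    simp [nonempty_iff_ne_empty, and_comm]
  rw [hfilter, sum_erase_eq_sub (empty_mem_powerset s), sum_powerset_apply_card, range_eq_Ico,
    sum_eq_sum_Ico_succ_bot (Nat.succ_pos _), Nat.succ_eq_add_one, zero_add,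
    Ico_add_one_right_eq_Icc]
  simp

theorem Finset.sum_Icc_pow_mul_one_sub_pow {R : Type*} [CommRing R] {T E : Finset α}
    (hTE : T ⊆ E) (p : R) :
    ∑ S ∈ Icc T E, p ^ #S * (1 - p) ^ (#E - #S) = p ^ #T := by
  have hdisj : ∀ U ∈ (E \ T).powerset, Disjoint T U := fun U hU =>
    disjoint_of_subset_right (mem_powerset.1 hU) disjoint_sdiff
  have hinj : Set.InjOn (T ∪ ·) (E \ T).powerset := fun U hU V hV hUV => by
    rw [← union_sdiff_cancel_left (hdisj U hU), ← union_sdiff_cancel_left (hdisj V hV)]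
    exact congrArg (· \ T) hUV
  rw [Icc_eq_image_powerset hTE, sum_image hinj]
  calc ∑ U ∈ (E \ T).powerset, p ^ #(T ∪ U) * (1 - p) ^ (#E - #(T ∪ U))
      = ∑ U ∈ (E \ T).powerset, p ^ #T * (p ^ #U * (1 - p) ^ (#(E \ T) - #U)) := by
        refine sum_congr rfl fun U hU => ?_
        rw [card_union_of_disjoint (hdisj U hU), card_sdiff_of_subset hTE, pow_add, Nat.sub_sub]
        ring
    _ = p ^ #T := by rw [← mul_sum, sum_pow_mul_eq_add_pow, add_sub_cancel, one_pow, mul_one]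

def Finset.cliqueEdges (x : Finset α) : Finset (Sym2 α) :=
  x.offDiag.image Sym2.mk.uncurry

theorem Finset.card_cliqueEdges (x : Finset α) : #x.cliqueEdges = (#x).choose 2 :=
  Sym2.card_image_offDiag x

theorem Finset.cliqueEdges_subset_iff {x : Finset α} {S : Finset (Sym2 α)} :
    x.cliqueEdges ⊆ S ↔ ∀ a ∈ x, ∀ b ∈ x, a ≠ b → s(a, b) ∈ S := by
  simp only [cliqueEdges, image_subset_iff, mem_offDiag, Function.uncurry, Prod.forall, and_imp]
  exact ⟨fun h a ha b hb => h a b ha hb, fun h a b ha hb => h a ha b hb⟩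

theorem Finset.cliqueEdges_subset_edgeFinset_top [Fintype α] (x : Finset α) :
    x.cliqueEdges ⊆ (⊤ : SimpleGraph α).edgeFinset := by
  simp [cliqueEdges, image_subset_iff]

end

theorem chiOfEdges_eq_sum_cliqueEdges_subset {n : ℕ} (S : Finset (Sym2 (Fin n))) :
    chiOfEdges S =
      ∑ x ∈ univ.powerset with x.Nonempty ∧ x.cliqueEdges ⊆ S, (-1 : ℝ) ^ (#x - 1) := by
  simp only [chiOfEdges, cliqueEdges_subset_iff]

theorem erdos_renyi_expected_euler_characteristic_general
    (n : ℕ) (p : ℝ) :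
    ∑ S ∈ ((⊤ : SimpleGraph (Fin n)).edgeFinset).powerset,
        p ^ S.card * (1 - p) ^ (((⊤ : SimpleGraph (Fin n)).edgeFinset).card - S.card)
          * chiOfEdges S
      = ∑ k ∈ Finset.Icc 1 n, (-1 : ℝ) ^ (k + 1) * (n.choose k : ℝ) * p ^ (k.choose 2) := by
  set E := (⊤ : SimpleGraph (Fin n)).edgeFinset
  calc ∑ S ∈ E.powerset, p ^ #S * (1 - p) ^ (#E - #S) * chiOfEdges S
      = ∑ x ∈ univ.powerset with x.Nonempty, ∑ S ∈ Icc x.cliqueEdges E,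
          p ^ #S * (1 - p) ^ (#E - #S) * (-1 : ℝ) ^ (#x - 1) := by
        simp_rw [chiOfEdges_eq_sum_cliqueEdges_subset, mul_sum]
        refine sum_comm' fun S x => ?_
        simp only [mem_powerset, mem_filter, mem_Icc, subset_univ, true_and]
        tauto
    _ = ∑ x ∈ univ.powerset with x.Nonempty, (-1 : ℝ) ^ (#x - 1) * p ^ (#x).choose 2 := by
        refine sum_congr rfl fun x _ => ?_
        rw [← sum_mul, sum_Icc_pow_mul_one_sub_pow (cliqueEdges_subset_edgeFinset_top x),
          card_cliqueEdges, mul_comm]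
    _ = ∑ k ∈ Icc 1 n, (-1 : ℝ) ^ (k + 1) * (n.choose k : ℝ) * p ^ (k.choose 2) := by
        rw [sum_powerset_filter_nonempty_apply_card (fun k => (-1 : ℝ) ^ (k - 1) * p ^ k.choose 2),
          card_univ, Fintype.card_fin]
        refine sum_congr rfl fun k hk => ?_
        obtain ⟨k, rfl⟩ := Nat.exists_eq_add_of_le' (mem_Icc.1 hk).1
        simp only [nsmul_eq_mul, Nat.add_sub_cancel, pow_succ]
        ring

/-- **Expected Euler characteristic in the Erdős–Rényi model `E(n,p)`.**
Each of the `C(n,2)` possible edges on `n` labeled vertices is present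
independently with probability `p`, so a graph with edge set `S` has probability
`p^|S| (1-p)^(C(n,2)-|S|)`.  The expected Euler characteristic of the Whitney
complex equals `∑_{k=1}^{n} (-1)^(k+1) C(n,k) p^(C(k,2))`. -/
theorem erdos_renyi_expected_euler_characteristic
    (n : ℕ) (p : ℝ) (hp : p ∈ Set.Icc (0 : ℝ) 1) :
    ∑ S ∈ ((⊤ : SimpleGraph (Fin n)).edgeFinset).powerset,
        p ^ S.card * (1 - p) ^ (((⊤ : SimpleGraph (Fin n)).edgeFinset).card - S.card)
          * chiOfEdges S
      = ∑ k ∈ Finset.Icc 1 n, (-1 : ℝ) ^ (k + 1) * (n.choose k : ℝ) * p ^ (k.choose 2) :=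
  erdos_renyi_expected_euler_characteristic_general n p
end

section
/- Let G and H be finite simple graphs on disjoint vertex sets and let G + H be their join (the disjoint union of G and H together with all edges between a vertex of G and a vertex of H). Then the Euler characteristics of the Whitney complexes satisfy χ(G + H) = χ(G) + χ(H) - χ(G)·χ(H). -/
open Finset

/-- The join `G + H` of two simple graphs on disjoint vertex sets: the disjoint
union of `G` and `H` together with all edges between a vertex of `G` and a
vertex of `H`. -/
def graphJoin {U W : Type*} (G : SimpleGraph U) (H : SimpleGraph W) :
    SimpleGraph (U ⊕ W) where
  Adj x y :=
    match x, y with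
    | Sum.inl a, Sum.inl b => G.Adj a b
    | Sum.inr a, Sum.inr b => H.Adj a b
    | Sum.inl _, Sum.inr _ => True
    | Sum.inr _, Sum.inl _ => True
  symm := by
    constructor
    rintro (a | a) (b | b) h
    · exact G.symm.symm _ _ h
    · trivial
    · trivial
    · exact H.symm.symm _ _ h
  loopless := by
    constructor
    rintro (a | a) h
    · exact G.loopless.irrefl a h
    · exact H.loopless.irrefl a h

/-!
Summing `(-1)^|s|` over all cliques `s` of `G`, the empty clique included, gives `1 - χ(G)`
(the negated reduced Euler characteristic). A clique of `G + H` is exactly the disjoint union of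
a clique of `G` and a clique of `H`, and `|s ⊔ t| = |s| + |t|`, so this signed clique count is
multiplicative under joins: `1 - χ(G + H) = (1 - χ(G)) (1 - χ(H))`.
-/

namespace SimpleGraph

variable {U W V : Type*}

theorem isClique_graphJoin_iff {G : SimpleGraph U} {H : SimpleGraph W} {s : Set (U ⊕ W)} :
    (graphJoin G H).IsClique s ↔ G.IsClique (Sum.inl ⁻¹' s) ∧ H.IsClique (Sum.inr ⁻¹' s) := by
  refine ⟨fun h => ⟨?_, ?_⟩, fun ⟨hG, hH⟩ => ?_⟩
  · exact fun a ha b hb hab => h ha hb (Sum.inl_injective.ne hab)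
  · exact fun a ha b hb hab => h ha hb (Sum.inr_injective.ne hab)
  · rintro (a | a) ha (b | b) hb hab
    · exact hG ha hb (ne_of_apply_ne _ hab)
    · trivial
    · trivial
    · exact hH ha hb (ne_of_apply_ne _ hab)

open Finset

variable [Fintype V]

noncomputable def cliqueFinsets (G : SimpleGraph V) : Finset (Finset V) := by
  classical exact univ.filter fun s => G.IsClique (s : Set V)

theorem mem_cliqueFinsets {G : SimpleGraph V} {s : Finset V} :
    s ∈ cliqueFinsets G ↔ G.IsClique (s : Set V) := by
  classical simp [cliqueFinsets]

theorem cliqueFinsets_eq_insert_whitneySimplices [DecidableEq V] (G : SimpleGraph V) :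
    cliqueFinsets G = insert ∅ (whitneySimplices G) := by
  ext s
  rcases s.eq_empty_or_nonempty with rfl | hs
  · simp [mem_cliqueFinsets]
  · simp [mem_cliqueFinsets, whitneySimplices, hs, hs.ne_empty, isClique_iff, Set.Pairwise]

theorem sum_cliqueFinsets_neg_one_pow (G : SimpleGraph V) :
    ∑ s ∈ cliqueFinsets G, (-1 : ℝ) ^ #s = 1 - whitneyChi G := by
  classical
  have hempty : ∅ ∉ whitneySimplices G := by simp [whitneySimplices]
  rw [cliqueFinsets_eq_insert_whitneySimplices, sum_insert hempty, whitneyChi, sub_eq_add_neg,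
    ← sum_neg_distrib, card_empty, pow_zero]
  congr 1
  refine sum_congr rfl fun s hs => ?_
  have hcard : #s = #s - 1 + 1 := (Nat.sub_add_cancel (card_pos.2 (mem_filter.1 hs).2.1)).symm
  rw [hcard, pow_succ, Nat.add_sub_cancel, mul_neg_one]

variable [Fintype U] [Fintype W]

theorem sum_cliqueFinsets_graphJoin (G : SimpleGraph U) (H : SimpleGraph W) :
    ∑ s ∈ cliqueFinsets (graphJoin G H), (-1 : ℝ) ^ #s
      = (∑ s ∈ cliqueFinsets G, (-1 : ℝ) ^ #s) * ∑ t ∈ cliqueFinsets H, (-1 : ℝ) ^ #t := by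
  rw [sum_mul_sum, ← sum_product']
  refine sum_equiv sumEquiv.toEquiv (fun s => ?_) (fun s _ => ?_)
  · simp only [mem_cliqueFinsets, isClique_graphJoin_iff, mem_product]
    congr! 2 <;> ext <;> simp
  · simp [← pow_add, card_toLeft_add_card_toRight]

end SimpleGraph

/-- **Euler characteristic of a join:**
`χ(G + H) = χ(G) + χ(H) - χ(G)·χ(H)`. -/
theorem whitneyChi_graphJoin {U W : Type*} [Fintype U] [Fintype W]
    (G : SimpleGraph U) (H : SimpleGraph W) :
    whitneyChi (graphJoin G H)
      = whitneyChi G + whitneyChi H - whitneyChi G * whitneyChi H := by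
  have h := SimpleGraph.sum_cliqueFinsets_graphJoin G H
  simp only [SimpleGraph.sum_cliqueFinsets_neg_one_pow] at h
  linear_combination -h
end
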